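/- arXiv:2406.05366 — 5 statements merged into one kernel-verified Lean document; each statement's English description precedes it below -/
import Mathlib

section
/- Let γ > 0 and let Γ̃ ≥ 1 satisfy 1 − γΓ̃ > 0. Fix A, A′ ∈ ℝ^{n×n}, B, B′ ∈ ℝ^{n×m}, a symmetric matrix Q ⪰ 0, a symmetric matrix R ⪰ I_m, and symmetric positive semidefinite P, P′ ∈ ℝ^{n×n}. Define P̃ = P + γP(I_n − γP)⁻¹P, K = −(BᵀP̃B + R)⁻¹BᵀP̃A, and the Riccati update F = Q + KᵀRK + (A + BK)ᵀP̃(A + BK); define P̃′, K′, F′ analogously from (A′, B′, P′). Assume ‖A‖, ‖B‖, ‖Q‖, ‖R‖, ‖P‖, ‖P̃‖, ‖K‖ ≤ Γ̃ − 1, and that ε > 0 and W ≥ 1 satisfy ‖A′ − A‖ ≤ ε, ‖B′ − B‖ ≤ ε and ‖P′ − P‖ ≤ Wε ≤ 1 (so that I_n − γP and I_n − γP′ are positive definite and all quantities are well defined). Set 𝓛 = 1/(1 − γΓ̃)² and 𝒱 = 2(𝓛 + 1)Γ̃³. Then ‖K′ − K‖ ≤ 𝒱Wε and ‖F′ − F‖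 ≤ 10𝒱²𝓛Γ̃⁴Wε. -/
/-!
Writing `M = 1 - γP`, so that `γP = 1 - M`, the risk-adjusted matrix is `P̃ = P M⁻¹ = M⁻¹ P`,
hence `P̃' - P̃ = M'⁻¹ (P' - P) M⁻¹`. Since `M ⪰ (1 - γΓ) I`, both resolvents have norm at most
`(1 - γΓ)⁻¹`, and `‖P̃' - P̃‖ ≤ 𝓛 ‖P' - P‖`.

The gain is `K = -G⁻¹H` with `G = BᵀP̃B + R ⪰ I`, so `‖G'⁻¹‖ ≤ 1` and
`K' - K = -G'⁻¹ ((H' - H) + (G' - G) K)`. Every other difference (of `H`, of `G`, of `KᵀRK` and of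
`(A + BK)ᵀ P̃ (A + BK)`) is one of triple products, `X'Y'Z' - XYZ`, which splits into three terms
each carrying a single perturbation.
-/

open Matrix
open scoped Matrix.Norms.L2Operator RealInnerProductSpace MatrixOrder

namespace Matrix

section Rectangular

variable {k l p q : Type*} [Fintype k] [Fintype l] [DecidableEq l] [Fintype p] [DecidableEq p]
  [Fintype q] [DecidableEq q]

lemma norm_mul_mul_sub_mul_mul_le {X X' : Matrix k l ℝ} {Y Y' : Matrix l p ℝ}
    {Z Z' : Matrix p q ℝ} {a b b' c' da db dc : ℝ} (hX : ‖X‖ ≤ a) (hY : ‖Y‖ ≤ b) (hY' : ‖Y'‖ ≤ b')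
    (hZ' : ‖Z'‖ ≤ c') (hdX : ‖X' - X‖ ≤ da) (hdY : ‖Y' - Y‖ ≤ db) (hdZ : ‖Z' - Z‖ ≤ dc) :
    ‖X' * Y' * Z' - X * Y * Z‖ ≤ da * b' * c' + a * db * c' + a * b * dc := by
  have h3 {X : Matrix k l ℝ} {Y : Matrix l p ℝ} {Z : Matrix p q ℝ} {x y z : ℝ} (hx : ‖X‖ ≤ x)
      (hy : ‖Y‖ ≤ y) (hz : ‖Z‖ ≤ z) : ‖X * Y * Z‖ ≤ x * y * z :=
    (l2_opNorm_mul _ _).trans <| mul_le_mul ((l2_opNorm_mul _ _).trans <|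
      mul_le_mul hx hy (norm_nonneg _) ((norm_nonneg _).trans hx)) hz (norm_nonneg _)
      (mul_nonneg ((norm_nonneg _).trans hx) ((norm_nonneg _).trans hy))
  have e : X' * Y' * Z' - X * Y * Z
      = (X' - X) * Y' * Z' + X * (Y' - Y) * Z' + X * Y * (Z' - Z) := by
    simp only [Matrix.sub_mul, Matrix.mul_sub]; abel
  rw [e]
  exact (norm_add₃_le ..).trans <| add_le_add_three (h3 hdX hY' hZ') (h3 hX hdY hZ') (h3 hX hY hdZ)

lemma norm_add_mul_sub_add_mul_le {A A' : Matrix k l ℝ} {B B' : Matrix k p ℝ}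
    {K K' : Matrix p l ℝ} :
    ‖(A' + B' * K') - (A + B * K)‖ ≤ ‖A' - A‖ + ‖B' - B‖ * ‖K'‖ + ‖B‖ * ‖K' - K‖ := by
  have e : (A' + B' * K') - (A + B * K) = (A' - A) + (B' - B) * K' + B * (K' - K) := by
    simp only [Matrix.sub_mul, Matrix.mul_sub]; abel
  rw [e]
  exact (norm_add₃_le ..).trans (add_le_add_three le_rfl (l2_opNorm_mul _ _) (l2_opNorm_mul _ _))

variable [DecidableEq k]

lemma l2_opNorm_transpose (A : Matrix k l ℝ) : ‖Aᵀ‖ = ‖A‖ := by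
  rw [← conjTranspose_eq_transpose_of_trivial, l2_opNorm_conjTranspose]

lemma l2_opNorm_transpose_sub (A B : Matrix k l ℝ) : ‖Aᵀ - Bᵀ‖ = ‖A - B‖ := by
  rw [← transpose_sub, l2_opNorm_transpose]

end Rectangular

lemma one_le_transpose_mul_mul_add {k l : Type*} [Fintype k] [Fintype l] [DecidableEq l]
    {P : Matrix k k ℝ} {R : Matrix l l ℝ} (B : Matrix k l ℝ) (hP : P.PosSemidef) (hR : 1 ≤ R) :
    1 ≤ Bᵀ * P * B + R :=
  le_add_of_nonneg_of_le (by simpa using (hP.conjTranspose_mul_mul_same B).nonneg) hR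

section Square

variable {k l : Type*} [DecidableEq k]

lemma posDef_of_smul_one_le {M : Matrix k k ℝ} {c : ℝ} (hc : 0 < c) (h : c • 1 ≤ M) : M.PosDef := by
  simpa using (PosDef.one.smul hc).add_posSemidef (le_iff.mp h)

variable [Fintype k]

lemma dotProduct_mulVec_le_l2_opNorm (M : Matrix k k ℝ) (x : k → ℝ) :
    x ⬝ᵥ M *ᵥ x ≤ ‖M‖ * (x ⬝ᵥ x) := by
  set v := WithLp.toLp 2 x
  have hx : x ⬝ᵥ x = ‖v‖ ^ 2 := by
    rw [← real_inner_self_eq_norm_sq, EuclideanSpace.inner_toLp_toLp, star_trivial, dotProduct_comm]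
  calc x ⬝ᵥ M *ᵥ x = ⟪v, toEuclideanCLM (𝕜 := ℝ) M v⟫ := (inner_toEuclideanCLM M v v).symm
    _ ≤ ‖v‖ * ‖toEuclideanCLM (𝕜 := ℝ) M v‖ := real_inner_le_norm _ _
    _ ≤ ‖v‖ * (‖M‖ * ‖v‖) := by gcongr; exact (toEuclideanCLM (𝕜 := ℝ) M).le_opNorm v
    _ = ‖M‖ * (x ⬝ᵥ x) := by rw [hx]; ring

lemma IsHermitian.le_smul_one_of_l2_opNorm_le {M : Matrix k k ℝ} (hM : M.IsHermitian) {t : ℝ}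
    (h : ‖M‖ ≤ t) : M ≤ t • 1 := by
  rw [le_iff, posSemidef_iff_dotProduct_mulVec]
  refine ⟨(isHermitian_one.smul (IsSelfAdjoint.all t)).sub hM, fun x => ?_⟩
  rw [star_trivial, sub_mulVec, dotProduct_sub, smul_mulVec, one_mulVec, dotProduct_smul,
    smul_eq_mul, sub_nonneg]
  exact (dotProduct_mulVec_le_l2_opNorm M x).trans
    (mul_le_mul_of_nonneg_right h (dotProduct_self_star_nonneg x))

lemma mul_norm_le_norm_toEuclideanCLM_of_smul_one_le {M : Matrix k k ℝ} {c : ℝ} (h : c • 1 ≤ M)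
    (x : EuclideanSpace ℝ k) : c * ‖x‖ ≤ ‖toEuclideanCLM (𝕜 := ℝ) M x‖ := by
  have hcoer : c * ‖x‖ ^ 2 ≤ ⟪x, toEuclideanCLM (𝕜 := ℝ) M x⟫ := by
    have := (posSemidef_iff_dotProduct_mulVec.mp (le_iff.mp h)).2 x.ofLp
    rw [star_trivial, sub_mulVec, dotProduct_sub, smul_mulVec, one_mulVec, dotProduct_smul,
      smul_eq_mul, sub_nonneg] at this
    rwa [inner_toEuclideanCLM, ← real_inner_self_eq_norm_sq]
  rcases (norm_nonneg x).eq_or_lt with hx | hx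
  · rw [← hx, mul_zero]; exact norm_nonneg _
  · refine le_of_mul_le_mul_right ?_ hx
    calc c * ‖x‖ * ‖x‖ = c * ‖x‖ ^ 2 := by ring
      _ ≤ ⟪x, toEuclideanCLM (𝕜 := ℝ) M x⟫ := hcoer
      _ ≤ ‖x‖ * ‖toEuclideanCLM (𝕜 := ℝ) M x‖ := real_inner_le_norm _ _
      _ = _ := mul_comm _ _

lemma isUnit_det_of_smul_one_le {M : Matrix k k ℝ} {c : ℝ} (hc : 0 < c) (h : c • 1 ≤ M) :
    IsUnit M.det :=
  (isUnit_iff_isUnit_det M).mp (posDef_of_smul_one_le hc h).isUnit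

lemma l2_opNorm_inv_le_of_smul_one_le {M : Matrix k k ℝ} {c : ℝ} (hc : 0 < c) (h : c • 1 ≤ M) :
    ‖M⁻¹‖ ≤ c⁻¹ := by
  have hM : M * M⁻¹ = 1 := mul_nonsing_inv M (isUnit_det_of_smul_one_le hc h)
  refine ContinuousLinearMap.opNorm_le_bound _ (inv_nonneg.mpr hc.le) fun y => ?_
  rw [inv_mul_eq_div, le_div_iff₀' hc]
  calc c * ‖toEuclideanCLM (𝕜 := ℝ) M⁻¹ y‖
      ≤ ‖toEuclideanCLM (𝕜 := ℝ) M (toEuclideanCLM (𝕜 := ℝ) M⁻¹ y)‖ :=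
        mul_norm_le_norm_toEuclideanCLM_of_smul_one_le h _
    _ = ‖y‖ := by
      rw [← mul_apply_eq_comp, ← map_mul, hM, map_one, one_apply_eq_self]

lemma inv_mul_sub_inv_mul {G G' : Matrix k k ℝ} (hG : IsUnit G.det) (hG' : IsUnit G'.det)
    (H H' : Matrix k l ℝ) :
    G'⁻¹ * H' - G⁻¹ * H = G'⁻¹ * ((H' - H) - (G' - G) * (G⁻¹ * H)) := by
  rw [Matrix.mul_sub, Matrix.mul_sub, Matrix.sub_mul, Matrix.mul_sub,
    nonsing_inv_mul_cancel_left _ _ hG', mul_nonsing_inv_cancel_left _ _ hG]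
  abel

end Square

end Matrix

section Riccati

variable {n m : Type*} [Fintype n] [DecidableEq n] [Fintype m] [DecidableEq m]

noncomputable def riskAdjusted (γ : ℝ) (P : Matrix n n ℝ) : Matrix n n ℝ :=
  P + γ • (P * (1 - γ • P)⁻¹ * P)

noncomputable def riccatiGain (A : Matrix n n ℝ) (B : Matrix n m ℝ) (R : Matrix m m ℝ)
    (Pt : Matrix n n ℝ) : Matrix m n ℝ :=
  -((Bᵀ * Pt * B + R)⁻¹ * (Bᵀ * Pt * A))

def riccatiUpdate (Q : Matrix n n ℝ) (R : Matrix m m ℝ) (A : Matrix n n ℝ) (B : Matrix n m ℝ)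
    (K : Matrix m n ℝ) (Pt : Matrix n n ℝ) : Matrix n n ℝ :=
  Q + Kᵀ * R * K + (A + B * K)ᵀ * Pt * (A + B * K)

variable {γ Γ : ℝ} {P P' : Matrix n n ℝ}

lemma smul_one_le_one_sub_smul (hP : P.IsHermitian) (hPn : ‖P‖ ≤ Γ) (hγ : 0 ≤ γ) :
    (1 - γ * Γ) • 1 ≤ 1 - γ • P := by
  rw [sub_smul, one_smul, mul_smul]
  exact sub_le_sub_left (smul_le_smul_of_nonneg_left (hP.le_smul_one_of_l2_opNorm_le hPn) hγ) 1

lemma isUnit_det_one_sub_smul (hP : P.IsHermitian) (hPn : ‖P‖ ≤ Γ) (hγ : 0 ≤ γ)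
    (hγΓ : 0 < 1 - γ * Γ) : IsUnit (1 - γ • P).det :=
  isUnit_det_of_smul_one_le hγΓ (smul_one_le_one_sub_smul hP hPn hγ)

lemma riskAdjusted_eq_mul_inv (h : IsUnit (1 - γ • P).det) :
    riskAdjusted γ P = P * (1 - γ • P)⁻¹ := by
  rw [riskAdjusted]
  generalize hM : 1 - γ • P = M at h ⊢
  rw [← Matrix.mul_smul, ← sub_sub_cancel 1 (γ • P), hM, Matrix.mul_sub, Matrix.mul_one,
    Matrix.mul_assoc P, nonsing_inv_mul _ h, Matrix.mul_one]
  abel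

lemma riskAdjusted_eq_inv_mul (h : IsUnit (1 - γ • P).det) :
    riskAdjusted γ P = (1 - γ • P)⁻¹ * P := by
  rw [riskAdjusted]
  generalize hM : 1 - γ • P = M at h ⊢
  rw [Matrix.mul_assoc, ← Matrix.smul_mul, ← sub_sub_cancel 1 (γ • P), hM, Matrix.sub_mul,
    Matrix.one_mul, mul_nonsing_inv_cancel_left _ _ h]
  abel

lemma riskAdjusted_sub_riskAdjusted (h : IsUnit (1 - γ • P).det) (h' : IsUnit (1 - γ • P').det) :
    riskAdjusted γ P' - riskAdjusted γ P = (1 - γ • P')⁻¹ * (P' - P) * (1 - γ • P)⁻¹ := by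
  have e : P' - P = P' * (1 - γ • P) - (1 - γ • P') * P := by
    simp only [Matrix.mul_sub, Matrix.sub_mul, Matrix.mul_one, Matrix.one_mul, Matrix.mul_smul,
      Matrix.smul_mul]
    abel
  rw [riskAdjusted_eq_inv_mul h', riskAdjusted_eq_mul_inv h, e, Matrix.mul_sub, Matrix.sub_mul,
    Matrix.mul_assoc, Matrix.mul_assoc, mul_nonsing_inv _ h, Matrix.mul_one, Matrix.mul_assoc,
    Matrix.mul_assoc (1 - γ • P'), nonsing_inv_mul_cancel_left _ _ h']

lemma norm_riskAdjusted_sub_le (hP : P.IsHermitian) (hP' : P'.IsHermitian) (hPn : ‖P‖ ≤ Γ)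
    (hP'n : ‖P'‖ ≤ Γ) (hγ : 0 ≤ γ) (hγΓ : 0 < 1 - γ * Γ) :
    ‖riskAdjusted γ P' - riskAdjusted γ P‖ ≤ ‖P' - P‖ / (1 - γ * Γ) ^ 2 := by
  have hM := l2_opNorm_inv_le_of_smul_one_le hγΓ (smul_one_le_one_sub_smul hP hPn hγ)
  have hM' := l2_opNorm_inv_le_of_smul_one_le hγΓ (smul_one_le_one_sub_smul hP' hP'n hγ)
  rw [riskAdjusted_sub_riskAdjusted (isUnit_det_one_sub_smul hP hPn hγ hγΓ)
    (isUnit_det_one_sub_smul hP' hP'n hγ hγΓ)]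
  calc _ ≤ (1 - γ * Γ)⁻¹ * ‖P' - P‖ * (1 - γ * Γ)⁻¹ :=
        (l2_opNorm_mul _ _).trans <| mul_le_mul ((l2_opNorm_mul _ _).trans <|
          mul_le_mul_of_nonneg_right hM' (norm_nonneg _)) hM (norm_nonneg _) (by positivity)
    _ = _ := by field_simp

lemma posSemidef_riskAdjusted (hP : P.PosSemidef) (hPn : ‖P‖ ≤ Γ) (hγ : 0 ≤ γ)
    (hγΓ : 0 < 1 - γ * Γ) : (riskAdjusted γ P).PosSemidef := by
  have hM := (posDef_of_smul_one_le hγΓ (smul_one_le_one_sub_smul hP.1 hPn hγ)).posSemidef.inv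
  have := hM.conjTranspose_mul_mul_same P
  rw [hP.1.eq] at this
  exact hP.add (this.smul hγ)

variable {A A' : Matrix n n ℝ} {B B' : Matrix n m ℝ} {R : Matrix m m ℝ} {Pt Pt' : Matrix n n ℝ}

lemma norm_riccatiGain_sub_le (hPt : Pt.PosSemidef) (hPt' : Pt'.PosSemidef) (hR : 1 ≤ R) :
    ‖riccatiGain A' B' R Pt' - riccatiGain A B R Pt‖ ≤
      ‖B'ᵀ * Pt' * A' - Bᵀ * Pt * A‖ +
        ‖B'ᵀ * Pt' * B' - Bᵀ * Pt * B‖ * ‖riccatiGain A B R Pt‖ := by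
  have hG := (one_smul ℝ (1 : Matrix m m ℝ)).symm ▸ one_le_transpose_mul_mul_add B hPt hR
  have hG' := (one_smul ℝ (1 : Matrix m m ℝ)).symm ▸ one_le_transpose_mul_mul_add B' hPt' hR
  have hG'inv : ‖(B'ᵀ * Pt' * B' + R)⁻¹‖ ≤ 1 := by
    simpa using l2_opNorm_inv_le_of_smul_one_le one_pos hG'
  rw [riccatiGain, riccatiGain, neg_sub_neg, norm_sub_rev, norm_neg,
    inv_mul_sub_inv_mul (isUnit_det_of_smul_one_le one_pos hG)
      (isUnit_det_of_smul_one_le one_pos hG'), add_sub_add_right_eq_sub]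
  refine (l2_opNorm_mul _ _).trans ?_
  refine (mul_le_mul hG'inv ?_ (norm_nonneg _) zero_le_one).trans_eq (one_mul _)
  refine (norm_sub_le _ _).trans ?_
  gcongr
  exact l2_opNorm_mul _ _

lemma norm_transpose_mul_mul_sub_le {p : Type*} [Fintype p] [DecidableEq p] {C C' : Matrix n p ℝ}
    {L δ : ℝ} (hB : ‖B‖ ≤ Γ) (hPt : ‖Pt‖ ≤ Γ) (hPt' : ‖Pt'‖ ≤ L * Γ) (hC' : ‖C'‖ ≤ Γ)
    (hdB : ‖B' - B‖ ≤ δ) (hdPt : ‖Pt' - Pt‖ ≤ L * δ) (hdC : ‖C' - C‖ ≤ δ) :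
    ‖B'ᵀ * Pt' * C' - Bᵀ * Pt * C‖ ≤ (2 * L + 1) * Γ ^ 2 * δ :=
  (norm_mul_mul_sub_mul_mul_le ((l2_opNorm_transpose B).trans_le hB) hPt hPt' hC'
    ((l2_opNorm_transpose_sub B' B).trans_le hdB) hdPt hdC).trans_eq (by ring)

lemma norm_riccatiGain_sub_le_of_perturbation {L δ : ℝ} (hPt : Pt.PosSemidef)
    (hPt' : Pt'.PosSemidef) (hR : 1 ≤ R) (hΓ : 1 ≤ Γ) (hL : 1 ≤ L) (hδ : δ ≤ 1)
    (hA : ‖A‖ ≤ Γ - 1) (hB : ‖B‖ ≤ Γ - 1) (hPtn : ‖Pt‖ ≤ Γ - 1) (hPt'n : ‖Pt'‖ ≤ L * Γ)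
    (hK : ‖riccatiGain A B R Pt‖ ≤ Γ - 1) (hdA : ‖A' - A‖ ≤ δ) (hdB : ‖B' - B‖ ≤ δ)
    (hdPt : ‖Pt' - Pt‖ ≤ L * δ) :
    ‖riccatiGain A' B' R Pt' - riccatiGain A B R Pt‖ ≤ 2 * (L + 1) * Γ ^ 3 * δ := by
  have hδ0 : 0 ≤ δ := (norm_nonneg _).trans hdA
  have hA' : ‖A'‖ ≤ Γ := by linarith [norm_le_norm_add_norm_sub' A' A]
  have hB' : ‖B'‖ ≤ Γ := by linarith [norm_le_norm_add_norm_sub' B' B]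
  have hH := norm_transpose_mul_mul_sub_le (by linarith) (by linarith) hPt'n hA' hdB hdPt hdA
  have hG := norm_transpose_mul_mul_sub_le (by linarith) (by linarith) hPt'n hB' hdB hdPt hdB
  refine (norm_riccatiGain_sub_le hPt hPt' hR).trans ?_
  nlinarith [mul_le_mul hG hK (norm_nonneg _) (by positivity),
    mul_nonneg (by positivity : (0:ℝ) ≤ Γ ^ 2 * δ) (by linarith : (0:ℝ) ≤ Γ)]

lemma riccatiUpdate_error_terms_le {Γ L V δ : ℝ} (hΓ : 1 ≤ Γ) (hL : 1 ≤ L) (hV : 4 * Γ ≤ V)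
    (hδ : 0 ≤ δ) :
    V * δ * Γ * (2 * V) + (Γ - 1) * 0 * (2 * V) + (Γ - 1) * Γ * (V * δ) +
      (2 * Γ * V * δ * (L * Γ) * (3 * Γ * V) + Γ ^ 2 * (L * δ) * (3 * Γ * V) +
        Γ ^ 2 * Γ * (2 * Γ * V * δ)) ≤ 10 * V ^ 2 * L * Γ ^ 4 * δ := by
  have hΓ4 : Γ ≤ Γ ^ 4 := le_self_pow₀ hΓ (by norm_num)
  have hΓ3 : Γ ^ 3 ≤ Γ ^ 4 := pow_le_pow_right₀ hΓ (by norm_num)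
  have hΓ2 : Γ ^ 2 ≤ Γ ^ 4 := pow_le_pow_right₀ hΓ (by norm_num)
  have hLΓ4 : Γ ^ 4 ≤ L * Γ ^ 4 := le_mul_of_one_le_left (by positivity) hL
  have hVL : 4 ≤ V * L := by nlinarith
  have key : 2 * V * Γ + Γ ^ 2 + 6 * L * V * Γ ^ 3 + 3 * L * Γ ^ 3 + 2 * Γ ^ 4 ≤
      10 * V * L * Γ ^ 4 := by
    nlinarith [mul_le_mul_of_nonneg_left (hΓ4.trans hLΓ4) (by linarith : (0:ℝ) ≤ V),
      mul_le_mul_of_nonneg_left hΓ3 (by nlinarith : (0:ℝ) ≤ L * V),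
      mul_le_mul_of_nonneg_left hΓ3 (by linarith : (0:ℝ) ≤ L),
      mul_le_mul_of_nonneg_left hΓ2 (by linarith : (0:ℝ) ≤ L),
      mul_le_mul_of_nonneg_right hVL (by positivity : (0:ℝ) ≤ Γ ^ 4)]
  have hVδ : 0 ≤ V * δ := mul_nonneg (by linarith) hδ
  nlinarith [mul_le_mul_of_nonneg_left key hVδ, mul_nonneg hVδ (by linarith : (0:ℝ) ≤ Γ)]

lemma norm_riccatiUpdate_sub_le {Q : Matrix n n ℝ} {K K' : Matrix m n ℝ} {L V δ : ℝ} (hΓ : 1 ≤ Γ)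
    (hL : 1 ≤ L) (hV : 4 * Γ ≤ V) (hδ : δ ≤ 1) (hA : ‖A‖ ≤ Γ - 1) (hB : ‖B‖ ≤ Γ - 1)
    (hR : ‖R‖ ≤ Γ) (hK : ‖K‖ ≤ Γ - 1) (hPt : ‖Pt‖ ≤ Γ) (hPt' : ‖Pt'‖ ≤ L * Γ)
    (hdA : ‖A' - A‖ ≤ δ) (hdB : ‖B' - B‖ ≤ δ) (hdPt : ‖Pt' - Pt‖ ≤ L * δ)
    (hdK : ‖K' - K‖ ≤ V * δ) :
    ‖riccatiUpdate Q R A' B' K' Pt' - riccatiUpdate Q R A B K Pt‖ ≤ 10 * V ^ 2 * L * Γ ^ 4 * δ := by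
  have hδ0 : 0 ≤ δ := (norm_nonneg _).trans hdA
  have hK'fine : ‖K'‖ ≤ Γ - 1 + V * δ := by linarith [norm_le_norm_add_norm_sub' K' K]
  have hK' : ‖K'‖ ≤ 2 * V := by nlinarith
  have hC : ‖A + B * K‖ ≤ Γ ^ 2 := (norm_add_le _ _).trans <| by
    nlinarith [(l2_opNorm_mul B K).trans (mul_le_mul hB hK (norm_nonneg _) (by linarith))]
  have hdC : ‖(A' + B' * K') - (A + B * K)‖ ≤ 2 * Γ * V * δ :=
    norm_add_mul_sub_add_mul_le.trans <| by
    nlinarith [mul_le_mul hdB hK'fine (norm_nonneg _) hδ0,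
      mul_le_mul hB hdK (norm_nonneg _) (by linarith : (0:ℝ) ≤ Γ - 1),
      mul_nonneg (mul_nonneg (by linarith : (0:ℝ) ≤ V) hδ0) (by linarith : (0:ℝ) ≤ 1 - δ),
      mul_nonneg (mul_nonneg (by linarith : (0:ℝ) ≤ Γ) hδ0) (by linarith : (0:ℝ) ≤ V - 1)]
  have hC' : ‖A' + B' * K'‖ ≤ 3 * Γ * V := by
    nlinarith [norm_le_norm_add_norm_sub' (A' + B' * K') (A + B * K),
      mul_nonneg (by linarith : (0:ℝ) ≤ Γ) (by linarith : (0:ℝ) ≤ V - 4 * Γ),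
      mul_nonneg (mul_nonneg (by linarith : (0:ℝ) ≤ Γ) (by linarith : (0:ℝ) ≤ V))
        (by linarith : (0:ℝ) ≤ 1 - δ)]
  have e : riccatiUpdate Q R A' B' K' Pt' - riccatiUpdate Q R A B K Pt =
      (K'ᵀ * R * K' - Kᵀ * R * K) +
        ((A' + B' * K')ᵀ * Pt' * (A' + B' * K') - (A + B * K)ᵀ * Pt * (A + B * K)) := by
    simp only [riccatiUpdate]; abel
  have hgain := norm_mul_mul_sub_mul_mul_le ((l2_opNorm_transpose K).trans_le hK) hR hR hK'
    ((l2_opNorm_transpose_sub K' K).trans_le hdK) (sub_self R ▸ norm_zero.le) hdK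
  have hloop := norm_mul_mul_sub_mul_mul_le ((l2_opNorm_transpose _).trans_le hC) hPt hPt' hC'
    ((l2_opNorm_transpose_sub _ _).trans_le hdC) hdPt hdC
  rw [e]
  exact (norm_add_le _ _).trans <|
    (add_le_add hgain hloop).trans (riccatiUpdate_error_terms_le hΓ hL hV hδ0)

end Riccati

theorem leqr_riccati_one_step_perturbation_general {n m : ℕ} (γ Γ ε W : ℝ)
    (A A' : Matrix (Fin n) (Fin n) ℝ) (B B' : Matrix (Fin n) (Fin m) ℝ)
    (Q : Matrix (Fin n) (Fin n) ℝ) (R : Matrix (Fin m) (Fin m) ℝ)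
    (P P' : Matrix (Fin n) (Fin n) ℝ)
    (hγ : 0 < γ) (hΓ : 1 ≤ Γ) (hγΓ : 0 < 1 - γ * Γ)
    (hR : (R - 1).PosSemidef)
    (hP : P.PosSemidef) (hP' : P'.PosSemidef)
    -- the Riccati update for (A, B, P)
    (Ptil : Matrix (Fin n) (Fin n) ℝ)
    (hPtil : Ptil = P + γ • (P * (1 - γ • P)⁻¹ * P))
    (K : Matrix (Fin m) (Fin n) ℝ)
    (hK : K = -((Bᵀ * Ptil * B + R)⁻¹ * (Bᵀ * Ptil * A)))
    (F : Matrix (Fin n) (Fin n) ℝ)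
    (hF : F = Q + Kᵀ * R * K + (A + B * K)ᵀ * Ptil * (A + B * K))
    -- the Riccati update for (A', B', P')
    (Ptil' : Matrix (Fin n) (Fin n) ℝ)
    (hPtil' : Ptil' = P' + γ • (P' * (1 - γ • P')⁻¹ * P'))
    (K' : Matrix (Fin m) (Fin n) ℝ)
    (hK' : K' = -((B'ᵀ * Ptil' * B' + R)⁻¹ * (B'ᵀ * Ptil' * A')))
    (F' : Matrix (Fin n) (Fin n) ℝ)
    (hF' : F' = Q + K'ᵀ * R * K' + (A' + B' * K')ᵀ * Ptil' * (A' + B' * K'))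
    -- norm bounds
    (hAn : ‖A‖ ≤ Γ - 1) (hBn : ‖B‖ ≤ Γ - 1) (hRn : ‖R‖ ≤ Γ - 1)
    (hPn : ‖P‖ ≤ Γ - 1) (hPtiln : ‖Ptil‖ ≤ Γ - 1) (hKn : ‖K‖ ≤ Γ - 1)
    -- perturbation sizes
    (hW : 1 ≤ W)
    (hAdiff : ‖A' - A‖ ≤ ε) (hBdiff : ‖B' - B‖ ≤ ε)
    (hPdiff : ‖P' - P‖ ≤ W * ε) (hWε : W * ε ≤ 1)
    -- constants
    (L V : ℝ) (hLdef : L = 1 / (1 - γ * Γ) ^ 2) (hVdef : V = 2 * (L + 1) * Γ ^ 3) :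
    ‖K' - K‖ ≤ V * W * ε ∧ ‖F' - F‖ ≤ 10 * V ^ 2 * L * Γ ^ 4 * W * ε := by
  have hεδ : ε ≤ W * ε := le_mul_of_one_le_left ((norm_nonneg _).trans hAdiff) hW
  have hL : 1 ≤ L := hLdef ▸ one_le_one_div (by positivity) (pow_le_one₀ hγΓ.le (by nlinarith))
  have hPΓ : ‖P‖ ≤ Γ := by linarith
  have hP'Γ : ‖P'‖ ≤ Γ := by linarith [norm_le_norm_add_norm_sub' P' P]
  have hdPt : ‖Ptil' - Ptil‖ ≤ L * (W * ε) := by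
    rw [hPtil, hPtil', hLdef, one_div_mul_eq_div]
    exact (norm_riskAdjusted_sub_le hP.1 hP'.1 hPΓ hP'Γ hγ.le hγΓ).trans (by gcongr)
  have hPt'n : ‖Ptil'‖ ≤ L * Γ := by
    nlinarith [norm_le_norm_add_norm_sub' Ptil' Ptil,
      mul_le_mul_of_nonneg_left hWε (by linarith : 0 ≤ L)]
  have hPt : Ptil.PosSemidef := hPtil ▸ posSemidef_riskAdjusted hP hPΓ hγ.le hγΓ
  have hPt' : Ptil'.PosSemidef := hPtil' ▸ posSemidef_riskAdjusted hP' hP'Γ hγ.le hγΓ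
  obtain rfl : K = riccatiGain A B R Ptil := hK
  obtain rfl : K' = riccatiGain A' B' R Ptil' := hK'
  obtain rfl : F = riccatiUpdate Q R A B _ Ptil := hF
  obtain rfl : F' = riccatiUpdate Q R A' B' _ Ptil' := hF'
  have hdK : ‖riccatiGain A' B' R Ptil' - riccatiGain A B R Ptil‖ ≤ V * (W * ε) := hVdef ▸
    norm_riccatiGain_sub_le_of_perturbation hPt hPt' hR hΓ hL hWε hAn hBn hPtiln hPt'n hKn
      (hAdiff.trans hεδ) (hBdiff.trans hεδ) hdPt
  refine ⟨(mul_assoc V W ε).symm ▸ hdK, (mul_assoc _ W ε).symm ▸ ?_⟩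
  have hV : 4 * Γ ≤ V := by
    rw [hVdef]
    nlinarith [le_self_pow₀ hΓ (show 3 ≠ 0 by norm_num), mul_nonneg (sub_nonneg.2 hL)
      (pow_nonneg (zero_le_one.trans hΓ) 3)]
  exact norm_riccatiUpdate_sub_le hΓ hL hV hWε hAn hBn (by linarith)
    hKn (by linarith) hPt'n (hAdiff.trans hεδ) (hBdiff.trans hεδ) hdPt hdK

/-- One-step perturbation bound for the LEQR Riccati update
(Lemma 6 of the paper). -/
theorem leqr_riccati_one_step_perturbation {n m : ℕ} (γ Γ ε W : ℝ)
    (A A' : Matrix (Fin n) (Fin n) ℝ) (B B' : Matrix (Fin n) (Fin m) ℝ)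
    (Q : Matrix (Fin n) (Fin n) ℝ) (R : Matrix (Fin m) (Fin m) ℝ)
    (P P' : Matrix (Fin n) (Fin n) ℝ)
    (hγ : 0 < γ) (hΓ : 1 ≤ Γ) (hγΓ : 0 < 1 - γ * Γ)
    (hQ : Q.PosSemidef) (hRsymm : R.IsSymm) (hR : (R - 1).PosSemidef)
    (hP : P.PosSemidef) (hP' : P'.PosSemidef)
    -- the Riccati update for (A, B, P)
    (Ptil : Matrix (Fin n) (Fin n) ℝ)
    (hPtil : Ptil = P + γ • (P * (1 - γ • P)⁻¹ * P))
    (K : Matrix (Fin m) (Fin n) ℝ)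
    (hK : K = -((Bᵀ * Ptil * B + R)⁻¹ * (Bᵀ * Ptil * A)))
    (F : Matrix (Fin n) (Fin n) ℝ)
    (hF : F = Q + Kᵀ * R * K + (A + B * K)ᵀ * Ptil * (A + B * K))
    -- the Riccati update for (A', B', P')
    (Ptil' : Matrix (Fin n) (Fin n) ℝ)
    (hPtil' : Ptil' = P' + γ • (P' * (1 - γ • P')⁻¹ * P'))
    (K' : Matrix (Fin m) (Fin n) ℝ)
    (hK' : K' = -((B'ᵀ * Ptil' * B' + R)⁻¹ * (B'ᵀ * Ptil' * A')))
    (F' : Matrix (Fin n) (Fin n) ℝ)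
    (hF' : F' = Q + K'ᵀ * R * K' + (A' + B' * K')ᵀ * Ptil' * (A' + B' * K'))
    -- norm bounds
    (hAn : ‖A‖ ≤ Γ - 1) (hBn : ‖B‖ ≤ Γ - 1) (hQn : ‖Q‖ ≤ Γ - 1) (hRn : ‖R‖ ≤ Γ - 1)
    (hPn : ‖P‖ ≤ Γ - 1) (hPtiln : ‖Ptil‖ ≤ Γ - 1) (hKn : ‖K‖ ≤ Γ - 1)
    -- perturbation sizes
    (hε : 0 < ε) (hW : 1 ≤ W)
    (hAdiff : ‖A' - A‖ ≤ ε) (hBdiff : ‖B' - B‖ ≤ ε)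
    (hPdiff : ‖P' - P‖ ≤ W * ε) (hWε : W * ε ≤ 1)
    -- constants
    (L V : ℝ) (hLdef : L = 1 / (1 - γ * Γ) ^ 2) (hVdef : V = 2 * (L + 1) * Γ ^ 3) :
    ‖K' - K‖ ≤ V * W * ε ∧ ‖F' - F‖ ≤ 10 * V ^ 2 * L * Γ ^ 4 * W * ε :=
  leqr_riccati_one_step_perturbation_general γ Γ ε W A A' B B' Q R P P' hγ hΓ hγΓ hR hP hP' Ptil
    hPtil K hK F hF Ptil' hPtil' K' hK' F' hF' hAn hBn hRn hPn hPtiln hKn hW hAdiff hBdiff hPdiff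
    hWε L V hLdef hVdef
end

section
/- Let γ > 0 and Γ̃ ≥ 1 with 1 − γΓ̃ > 0. Let P, P′ ∈ ℝ^{n×n} be symmetric matrices with ‖P‖ ≤ Γ̃ − 1 and ‖P′ − P‖ ≤ δ for some 0 < δ ≤ 1 (so ‖P′‖ ≤ Γ̃ and both I_n − γP and I_n − γP′ are invertible). Then ‖(I_n − γP′)⁻¹P′ − (I_n − γP)⁻¹P‖ ≤ δ/(1 − γΓ̃)². -/
open Matrix
open scoped Matrix.Norms.L2Operator
open scoped Ring

/-!
The map `f P = (1 - γ P)⁻¹ P` satisfies the resolvent identity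
`f P' - f P = (1 - γ P')⁻¹ (P' - P) (1 - γ P)⁻¹`, and the Neumann series bounds both resolvents
by `(1 - γ Γ)⁻¹` as soon as `‖γ P‖, ‖γ P'‖ ≤ γ Γ < 1`.
-/

theorem Ring.inverse_one_sub_smul_mul_sub {𝕜 R : Type*} [CommRing 𝕜] [Ring R] [Algebra 𝕜 R]
    (γ : 𝕜) {a b : R} (ha : IsUnit (1 - γ • a)) (hb : IsUnit (1 - γ • b)) :
    (1 - γ • b)⁻¹ʳ * b - (1 - γ • a)⁻¹ʳ * a = (1 - γ • b)⁻¹ʳ * (b - a) * (1 - γ • a)⁻¹ʳ := by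
  set u := 1 - γ • a
  set v := 1 - γ • b
  have hcomm : a * u⁻¹ʳ = u⁻¹ʳ * a := by
    have : Commute a ha.unit := by
      rw [ha.unit_spec]
      exact (Commute.one_right a).sub_right ((Commute.refl a).smul_right γ)
    rw [← ha.unit_spec, Ring.inverse_unit]
    exact this.units_inv_right.eq
  have hexpand : b * u - v * a = b - a := by
    simp only [u, v, mul_sub, sub_mul, mul_one, one_mul, mul_smul_comm, smul_mul_assoc]
    abel
  calc v⁻¹ʳ * b - u⁻¹ʳ * a
      = v⁻¹ʳ * b * (u * u⁻¹ʳ) - (v⁻¹ʳ * v) * (a * u⁻¹ʳ) := by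
        rw [Ring.mul_inverse_cancel u ha, Ring.inverse_mul_cancel v hb, hcomm, mul_one, one_mul]
    _ = v⁻¹ʳ * (b * u - v * a) * u⁻¹ʳ := by noncomm_ring
    _ = v⁻¹ʳ * (b - a) * u⁻¹ʳ := by rw [hexpand]

theorem CStarRing.norm_one_le {E : Type*} [NormedRing E] [StarRing E] [CStarRing E] :
    ‖(1 : E)‖ ≤ 1 := by
  rcases subsingleton_or_nontrivial E with hE | hE
  · simp [Subsingleton.elim (1 : E) 0]
  · exact (CStarRing.norm_one (E := E)).le

theorem norm_inverse_one_sub_le {R : Type*} [NormedRing R] [HasSummableGeomSeries R]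
    (hone : ‖(1 : R)‖ ≤ 1) {x : R} (hx : ‖x‖ < 1) : ‖(1 - x)⁻¹ʳ‖ ≤ (1 - ‖x‖)⁻¹ := by
  rw [← geom_series_eq_inverse x hx]
  linarith [tsum_geometric_le_of_norm_lt_one x hx]

theorem norm_inverse_one_sub_smul_mul_sub_le {𝕜 R : Type*} [NormedField 𝕜] [NormedRing R]
    [NormedAlgebra 𝕜 R] [HasSummableGeomSeries R] (hone : ‖(1 : R)‖ ≤ 1) {γ : 𝕜} {a b : R}
    {s : ℝ} (ha : ‖γ • a‖ ≤ s) (hb : ‖γ • b‖ ≤ s) (hs : s < 1) :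
    ‖(1 - γ • b)⁻¹ʳ * b - (1 - γ • a)⁻¹ʳ * a‖ ≤ ‖b - a‖ / (1 - s) ^ 2 := by
  have inverse_le {x : R} (hx : ‖x‖ ≤ s) : ‖(1 - x)⁻¹ʳ‖ ≤ (1 - s)⁻¹ :=
    (norm_inverse_one_sub_le hone (hx.trans_lt hs)).trans
      (inv_anti₀ (by linarith) (by linarith))
  rw [Ring.inverse_one_sub_smul_mul_sub γ (isUnit_one_sub_of_norm_lt_one (ha.trans_lt hs))
    (isUnit_one_sub_of_norm_lt_one (hb.trans_lt hs))]
  calc ‖(1 - γ • b)⁻¹ʳ * (b - a) * (1 - γ • a)⁻¹ʳ‖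
      ≤ ‖(1 - γ • b)⁻¹ʳ‖ * ‖b - a‖ * ‖(1 - γ • a)⁻¹ʳ‖ := norm_mul₃_le
    _ ≤ (1 - s)⁻¹ * ‖b - a‖ * (1 - s)⁻¹ := by
        have : 0 ≤ (1 - s)⁻¹ := inv_nonneg.mpr (by linarith)
        gcongr
        exacts [inverse_le hb, inverse_le ha]
    _ = ‖b - a‖ / (1 - s) ^ 2 := by field_simp

theorem leqr_resolvent_lipschitz_general {n : ℕ} (γ Γ δ : ℝ)
    (hγ : 0 < γ) (hγΓ : 0 < 1 - γ * Γ)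
    (P P' : Matrix (Fin n) (Fin n) ℝ)
    (hPnorm : ‖P‖ ≤ Γ - 1)
    (hδle : δ ≤ 1)
    (hdiff : ‖P' - P‖ ≤ δ) :
    ‖(1 - γ • P')⁻¹ * P' - (1 - γ • P)⁻¹ * P‖ ≤ δ / (1 - γ * Γ) ^ 2 := by
  have hP : ‖γ • P‖ ≤ γ * Γ := by
    rw [norm_smul, Real.norm_of_nonneg hγ.le]
    gcongr
    linarith
  have hP' : ‖γ • P'‖ ≤ γ * Γ := by
    rw [norm_smul, Real.norm_of_nonneg hγ.le]
    gcongr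
    linarith [norm_le_norm_add_norm_sub' P' P]
  simp only [nonsing_inv_eq_ringInverse]
  calc _ ≤ ‖P' - P‖ / (1 - γ * Γ) ^ 2 :=
        norm_inverse_one_sub_smul_mul_sub_le CStarRing.norm_one_le hP hP' (by linarith)
    _ ≤ δ / (1 - γ * Γ) ^ 2 := by gcongr

/-- Lipschitz estimate for `P ↦ (I - γP)⁻¹ P` in spectral norm. -/
theorem leqr_resolvent_lipschitz {n : ℕ} (γ Γ δ : ℝ)
    (hγ : 0 < γ) (hΓ : 1 ≤ Γ) (hγΓ : 0 < 1 - γ * Γ)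
    (P P' : Matrix (Fin n) (Fin n) ℝ)
    (hPsymm : P.IsSymm) (hP'symm : P'.IsSymm)
    (hPnorm : ‖P‖ ≤ Γ - 1)
    (hδpos : 0 < δ) (hδle : δ ≤ 1)
    (hdiff : ‖P' - P‖ ≤ δ) :
    ‖(1 - γ • P')⁻¹ * P' - (1 - γ • P)⁻¹ * P‖ ≤ δ / (1 - γ * Γ) ^ 2 :=
  leqr_resolvent_lipschitz_general γ Γ δ hγ hγΓ P P' hPnorm hδle hdiff
end

section
/- Let C_K ≥ 0 and set c* = (C_K² − C_K√(C_K² + 4) + 2)/2. Then 0 < c* ≤ 1 (with c* < 1 when C_K > 0). Moreover, for every K ∈ ℝ^{m×n} with ‖K‖ ≤ C_K, every symmetric M ∈ ℝ^{n×n} with M − I_n positive semidefinite, every s ∈ (0, 1], and every c with 0 < c ≤ c*, the (n+m)×(n+m) block matrix with blocks [[M, MKᵀ], [KM, KMKᵀ + s·I_m]] minus c·s·I_{n+m} is positive semidefinite. -/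
open Matrix
open scoped Matrix.Norms.L2Operator

/-!
With `L = [1; K]` the block matrix is `L M Lᵀ + diag(0, s)`, and `M ⪰ 1` reduces it to
`L Lᵀ + diag(0, s)`, whose quadratic form at `(u, v)` is `‖u + Kᵀ v‖² + s ‖v‖²`. Since
`‖u‖ ≤ ‖u + Kᵀ v‖ + C ‖v‖`, this is at least `c s (‖u‖² + ‖v‖²)` once the binary quadratic form
`w² + (1 - c) b² - c (w + C b)²` is nonnegative, i.e. once `c C² ≤ (1 - c)²`; on `(0, 1]` this
holds exactly up to the smaller root `c*` of `(1 - c)² = C² c`.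
-/

/-- The smaller root of `(1 - c)² = C² c`. -/
noncomputable def lowerRoot (C : ℝ) : ℝ := (C ^ 2 - C * √(C ^ 2 + 4) + 2) / 2

section lowerRoot

variable {C : ℝ}

theorem one_sub_lowerRoot_sq (C : ℝ) : (1 - lowerRoot C) ^ 2 = C ^ 2 * lowerRoot C := by
  unfold lowerRoot
  linear_combination (C ^ 2 / 4) * Real.sq_sqrt (by positivity : (0 : ℝ) ≤ C ^ 2 + 4)

theorem lowerRoot_pos (C : ℝ) : 0 < lowerRoot C := by
  have := Real.sq_sqrt (by positivity : (0 : ℝ) ≤ C ^ 2 + 4)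
  unfold lowerRoot
  nlinarith [sq_nonneg (C * √(C ^ 2 + 4) - C ^ 2 - 2), Real.sqrt_nonneg (C ^ 2 + 4)]

theorem lowerRoot_le_one (hC : 0 ≤ C) : lowerRoot C ≤ 1 := by
  have : C ≤ √(C ^ 2 + 4) := Real.le_sqrt_of_sq_le (by linarith)
  unfold lowerRoot
  nlinarith [mul_le_mul_of_nonneg_left this hC]

theorem lowerRoot_lt_one (hC : 0 < C) : lowerRoot C < 1 := by
  have : C < √(C ^ 2 + 4) := Real.lt_sqrt_of_sq_lt (by linarith)
  unfold lowerRoot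
  nlinarith [mul_lt_mul_of_pos_left this hC]

theorem mul_sq_le_one_sub_sq_of_le_lowerRoot (hC : 0 ≤ C) {c : ℝ} (hc : c ≤ lowerRoot C) :
    c * C ^ 2 ≤ (1 - c) ^ 2 := by
  have := lowerRoot_le_one hC
  -- `(1 - c)² - c C² = (c* - c) (2 + C² - c - c*)` since `c*` is a root
  nlinarith [one_sub_lowerRoot_sq C,
    mul_nonneg (sub_nonneg.2 hc) (by nlinarith : 0 ≤ 2 + C ^ 2 - c - lowerRoot C)]

end lowerRoot

theorem mul_add_mul_sq_le_sq_add_one_sub_mul_sq {c C w b : ℝ} (hc : c ≤ 1)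
    (hcC : c * C ^ 2 ≤ (1 - c) ^ 2) :
    c * (w + C * b) ^ 2 ≤ w ^ 2 + (1 - c) * b ^ 2 := by
  rcases hc.lt_or_eq with hc | rfl
  · -- `(1 - c)` times the gap is `((1 - c) w - c C b)² + ((1 - c)² - c C²) b²`
    have key : 0 ≤ (1 - c) * (w ^ 2 + (1 - c) * b ^ 2 - c * (w + C * b) ^ 2) := by
      nlinarith [sq_nonneg ((1 - c) * w - c * C * b),
        mul_nonneg (sub_nonneg.2 hcC) (sq_nonneg b)]
    nlinarith [(mul_nonneg_iff_of_pos_left (sub_pos.2 hc)).1 key]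
  · obtain rfl : C = 0 := by simpa using hcC
    simp

theorem mul_norm_sq_add_norm_sq_le {E F : Type*} [SeminormedAddCommGroup E]
    [SeminormedAddGroup F] {c C : ℝ} (hc₀ : 0 ≤ c) (hc₁ : c ≤ 1)
    (hcC : c * C ^ 2 ≤ (1 - c) ^ 2) {u y : E} {v : F} (hy : ‖y‖ ≤ C * ‖v‖) :
    c * (‖u‖ ^ 2 + ‖v‖ ^ 2) ≤ ‖u + y‖ ^ 2 + ‖v‖ ^ 2 := by
  have hu : ‖u‖ ≤ ‖u + y‖ + C * ‖v‖ :=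
    calc ‖u‖ = ‖(u + y) - y‖ := by rw [add_sub_cancel_right]
      _ ≤ ‖u + y‖ + ‖y‖ := norm_sub_le _ _
      _ ≤ ‖u + y‖ + C * ‖v‖ := by gcongr
  nlinarith [mul_add_mul_sq_le_sq_add_one_sub_mul_sq (w := ‖u + y‖) (b := ‖v‖) hc₁ hcC,
    pow_le_pow_left₀ (norm_nonneg u) hu 2]

section Matrix

variable {m n : Type*} [Fintype m] [Fintype n] [DecidableEq m] [DecidableEq n]

omit [DecidableEq n] in
theorem dotProduct_self_eq_norm_sq (u : n → ℝ) : u ⬝ᵥ u = ‖WithLp.toLp 2 u‖ ^ 2 := by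
  rw [← real_inner_self_eq_norm_sq, EuclideanSpace.inner_toLp_toLp, star_trivial]

theorem norm_transpose_mulVec_le {K : Matrix m n ℝ} {C : ℝ} (hK : ‖K‖ ≤ C) (v : m → ℝ) :
    ‖WithLp.toLp 2 (Kᵀ *ᵥ v)‖ ≤ C * ‖WithLp.toLp 2 v‖ := by
  have hKt : ‖Kᵀ‖ = ‖K‖ := by
    rw [← conjTranspose_eq_transpose_of_trivial, l2_opNorm_conjTranspose]
  calc _ ≤ ‖Kᵀ‖ * ‖WithLp.toLp 2 v‖ := Kᵀ.l2_opNorm_mulVec _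
    _ ≤ C * ‖WithLp.toLp 2 v‖ := by rw [hKt]; gcongr

theorem mul_dotProduct_self_add_le {K : Matrix m n ℝ} {C c : ℝ} (hK : ‖K‖ ≤ C)
    (hc₀ : 0 ≤ c) (hc₁ : c ≤ 1) (hcC : c * C ^ 2 ≤ (1 - c) ^ 2) (u : n → ℝ) (v : m → ℝ) :
    c * (u ⬝ᵥ u + v ⬝ᵥ v) ≤ (u + Kᵀ *ᵥ v) ⬝ᵥ (u + Kᵀ *ᵥ v) + v ⬝ᵥ v := by
  simp only [dotProduct_self_eq_norm_sq, WithLp.toLp_add]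
  exact mul_norm_sq_add_norm_sq_le hc₀ hc₁ hcC (norm_transpose_mulVec_le hK v)

omit [Fintype m] in
theorem fromBlocks_eq_fromRows_mul_mul_fromCols_add {R : Type*} [Semiring R]
    (K : Matrix m n R) (M : Matrix n n R) (s : R) :
    fromBlocks M (M * Kᵀ) (K * M) (K * M * Kᵀ + s • 1) =
      fromRows 1 K * M * fromCols 1 Kᵀ + fromBlocks 0 0 0 (s • 1) := by
  simp [fromBlocks_add]

omit [Fintype m] [Fintype n] [DecidableEq m] in
theorem conjTranspose_fromRows_one {R : Type*} [Semiring R] [StarRing R] [TrivialStar R]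
    (K : Matrix m n R) : (fromRows (1 : Matrix n n R) K)ᴴ = fromCols 1 Kᵀ := by
  rw [conjTranspose_eq_transpose_of_trivial, transpose_fromRows, transpose_one]

theorem sumElim_dotProduct_fromRows_mul_fromCols_add_mulVec {R : Type*} [CommSemiring R]
    (K : Matrix m n R) (s : R) (u : n → R) (v : m → R) :
    Sum.elim u v ⬝ᵥ ((fromRows 1 K * fromCols 1 Kᵀ + fromBlocks 0 0 0 (s • 1)) *ᵥ Sum.elim u v) =
      (u + Kᵀ *ᵥ v) ⬝ᵥ (u + Kᵀ *ᵥ v) + s * (v ⬝ᵥ v) := by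
  rw [add_mulVec, dotProduct_add, ← mulVec_mulVec, dotProduct_mulVec, sumElim_vecMul_fromRows,
    fromCols_mulVec_sumElim, vecMul_one, one_mulVec, ← mulVec_transpose, fromBlocks_mulVec,
    sumElim_dotProduct_sumElim]
  simp [smul_mulVec]

theorem posSemidef_fromRows_mul_fromCols_add_sub {K : Matrix m n ℝ} {C c s : ℝ} (hK : ‖K‖ ≤ C)
    (hc₀ : 0 ≤ c) (hc₁ : c ≤ 1) (hcC : c * C ^ 2 ≤ (1 - c) ^ 2) (hs₀ : 0 ≤ s) (hs₁ : s ≤ 1) :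
    (fromRows (1 : Matrix n n ℝ) K * fromCols 1 Kᵀ + fromBlocks 0 0 0 (s • 1) -
      (c * s) • 1).PosSemidef := by
  refine .of_dotProduct_mulVec_nonneg ?_ fun x => ?_
  · refine IsHermitian.sub (.add ?_ (isHermitian_zero.fromBlocks (by simp) ?_)) ?_
    · simpa only [conjTranspose_fromRows_one] using
        isHermitian_mul_conjTranspose_self (fromRows (1 : Matrix n n ℝ) K)
    · exact isHermitian_one.smul (IsSelfAdjoint.all s)
    · exact isHermitian_one.smul (IsSelfAdjoint.all (c * s))
  · rw [star_trivial, ← Sum.elim_comp_inl_inr x, sub_mulVec, dotProduct_sub, smul_mulVec,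
      one_mulVec, dotProduct_smul, smul_eq_mul, sumElim_dotProduct_sumElim,
      sumElim_dotProduct_fromRows_mul_fromCols_add_mulVec]
    set w := x ∘ Sum.inl + Kᵀ *ᵥ (x ∘ Sum.inr)
    have hw : 0 ≤ w ⬝ᵥ w := by simpa using dotProduct_star_self_nonneg w
    nlinarith [mul_le_mul_of_nonneg_left
      (mul_dotProduct_self_add_le hK hc₀ hc₁ hcC (x ∘ Sum.inl) (x ∘ Sum.inr)) hs₀]

end Matrix

/-- The deterministic block-matrix inequality behind the lower bound
on the conditional second moment of the state-action vector under exploration noise. -/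
theorem block_second_moment_lower_bound (CK : ℝ) (hCK : 0 ≤ CK)
    (cstar : ℝ) (hcstar : cstar = (CK ^ 2 - CK * Real.sqrt (CK ^ 2 + 4) + 2) / 2) :
    (0 < cstar ∧ cstar ≤ 1 ∧ (0 < CK → cstar < 1)) ∧
    ∀ (n m : ℕ) (K : Matrix (Fin m) (Fin n) ℝ), ‖K‖ ≤ CK →
      ∀ (M : Matrix (Fin n) (Fin n) ℝ), M.IsSymm → (M - 1).PosSemidef →
        ∀ s : ℝ, 0 < s → s ≤ 1 → ∀ c : ℝ, 0 < c → c ≤ cstar →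
          (Matrix.fromBlocks M (M * Kᵀ) (K * M) (K * M * Kᵀ + s • 1) -
            (c * s) • (1 : Matrix (Fin n ⊕ Fin m) (Fin n ⊕ Fin m) ℝ)).PosSemidef := by
  change cstar = lowerRoot CK at hcstar
  subst hcstar
  refine ⟨⟨lowerRoot_pos CK, lowerRoot_le_one hCK, lowerRoot_lt_one⟩, ?_⟩
  intro n m K hK M _ hM s hs hs₁ c hc hcc
  have hsplit : fromBlocks M (M * Kᵀ) (K * M) (K * M * Kᵀ + s • 1) - (c * s) • 1 =
      fromRows 1 K * (M - 1) * (fromRows 1 K)ᴴ +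
        (fromRows 1 K * fromCols 1 Kᵀ + fromBlocks 0 0 0 (s • 1) - (c * s) • 1) := by
    rw [fromBlocks_eq_fromRows_mul_mul_fromCols_add, conjTranspose_fromRows_one,
      Matrix.mul_sub, Matrix.sub_mul, Matrix.mul_one]
    abel
  rw [hsplit]
  exact (hM.mul_mul_conjTranspose_same _).add <|
    posSemidef_fromRows_mul_fromCols_add_sub hK hc.le (hcc.trans (lowerRoot_le_one hCK))
      (mul_sq_le_one_sub_sq_of_le_lowerRoot hCK hcc) hs.le hs₁
end

section
/- Let λ > 0, let V̄ ∈ ℝ^{d×d} be a symmetric matrix with V̄ − λI_d positive semidefinite (so V̄ is invertible), let θ, S ∈ ℝ^{d×n}, and set θ′ = θ + V̄⁻¹(S − λθ). Then Tr((θ′ − θ)ᵀ V̄ (θ′ − θ)) ≤ 2 Tr(Sᵀ V̄⁻¹ S) + 2λ‖θ‖_F². -/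
open Matrix
open scoped Matrix.Norms.L2Operator

/-!
Writing `W = V̄⁻¹`, the error is `θ' - θ = W (S - λθ)`, so its `V̄`-weighted energy is
`Tr((S - λθ)ᵀ W (S - λθ))`. The parallelogram law for the form `X ↦ Tr(Xᵀ W X)` bounds this by
`2 Tr(Sᵀ W S) + 2λ² Tr(θᵀ W θ)`, and `V̄ ≥ λ I` gives `W ≤ λ⁻¹ I` in the Loewner order.
-/

namespace Matrix

section Loewner

variable {m : Type*} [DecidableEq m]

theorem PosDef.of_posSemidef_sub_smul_one {c : ℝ} (hc : 0 < c) {V : Matrix m m ℝ}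
    (hV : (V - c • 1).PosSemidef) : V.PosDef := by
  simpa using PosDef.posSemidef_add hV (PosDef.one.smul hc)

/-- `V - c I` and `c⁻¹ I - V⁻¹` are the two Schur complements of `[[V, I], [I, c⁻¹ I]]`. -/
theorem posSemidef_inv_smul_one_sub_inv [Fintype m] {c : ℝ} (hc : 0 < c) {V : Matrix m m ℝ}
    (hV : (V - c • 1).PosSemidef) : (c⁻¹ • 1 - V⁻¹).PosSemidef := by
  have hVpd := PosDef.of_posSemidef_sub_smul_one hc hV
  have hD : (c⁻¹ • 1 : Matrix m m ℝ).PosDef := PosDef.one.smul (inv_pos.2 hc)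
  have hD_inv : (c⁻¹ • 1 : Matrix m m ℝ)⁻¹ = c • 1 :=
    inv_eq_left_inv (by simp [smul_smul, hc.ne'])
  let := hVpd.isUnit.invertible
  let := hD.isUnit.invertible
  have hblock : (fromBlocks V 1 1ᴴ (c⁻¹ • 1 : Matrix m m ℝ)).PosSemidef := by
    rw [PosDef.fromBlocks₂₂ _ _ hD, hD_inv]
    simpa using hV
  simpa using (PosDef.fromBlocks₁₁ _ _ hVpd).1 hblock

end Loewner

section TraceForm

variable {m n : Type*} [Fintype m] [Fintype n]

theorem trace_transpose_mul_mul_nonneg {M : Matrix m m ℝ} (hM : M.PosSemidef)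
    (X : Matrix m n ℝ) : 0 ≤ (Xᵀ * M * X).trace := by
  simpa using (hM.conjTranspose_mul_mul_same X).trace_nonneg

theorem trace_transpose_mul_mul_le_of_posSemidef_sub {M N : Matrix m m ℝ}
    (h : (N - M).PosSemidef) (X : Matrix m n ℝ) :
    (Xᵀ * M * X).trace ≤ (Xᵀ * N * X).trace := by
  have := trace_transpose_mul_mul_nonneg h X
  rwa [Matrix.mul_sub, Matrix.sub_mul, trace_sub, sub_nonneg] at this

theorem trace_transpose_mul_mul_sub_le {M : Matrix m m ℝ} (hM : M.PosSemidef)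
    (A B : Matrix m n ℝ) :
    ((A - B)ᵀ * M * (A - B)).trace ≤ 2 * (Aᵀ * M * A).trace + 2 * (Bᵀ * M * B).trace := by
  have parallelogram : (A - B)ᵀ * M * (A - B) + (A + B)ᵀ * M * (A + B)
      = (2 : ℝ) • (Aᵀ * M * A) + (2 : ℝ) • (Bᵀ * M * B) := by
    simp only [transpose_sub, transpose_add, Matrix.sub_mul, Matrix.add_mul, Matrix.mul_sub,
      Matrix.mul_add]
    module
  have := congrArg trace parallelogram
  simp only [trace_add, trace_smul, smul_eq_mul] at this
  linarith [trace_transpose_mul_mul_nonneg hM (A + B)]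

end TraceForm

theorem transpose_inv_mul_mul_inv_mul {m n R : Type*} [Fintype m] [DecidableEq m] [CommRing R]
    {V : Matrix m m R} (hV : V.IsSymm) (hdet : IsUnit V.det) (A : Matrix m n R) :
    (V⁻¹ * A)ᵀ * V * (V⁻¹ * A) = Aᵀ * V⁻¹ * A := by
  rw [transpose_mul, transpose_nonsing_inv, hV.eq, Matrix.mul_assoc, Matrix.mul_assoc,
    ← Matrix.mul_assoc V, mul_nonsing_inv _ hdet, Matrix.one_mul, Matrix.mul_assoc]

end Matrix

/-- Deterministic error decomposition for the regularized
least-squares estimator: `Tr((θ' - θ)ᵀ V̄ (θ' - θ)) ≤ 2 Tr(Sᵀ V̄⁻¹ S) + 2λ‖θ‖_F²`,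
where `‖θ‖_F² = Tr(θᵀθ)`. -/
theorem regularized_least_squares_error_decomposition {d n : ℕ}
    (lam : ℝ) (hlam : 0 < lam)
    (Vbar : Matrix (Fin d) (Fin d) ℝ) (hVsymm : Vbar.IsSymm)
    (hV : (Vbar - lam • 1).PosSemidef)
    (θ S θ' : Matrix (Fin d) (Fin n) ℝ)
    (hθ' : θ' = θ + Vbar⁻¹ * (S - lam • θ)) :
    ((θ' - θ)ᵀ * Vbar * (θ' - θ)).trace ≤
      2 * (Sᵀ * Vbar⁻¹ * S).trace + 2 * lam * (θᵀ * θ).trace := by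
  have hVpd := PosDef.of_posSemidef_sub_smul_one hlam hV
  have hdet : IsUnit Vbar.det := (isUnit_iff_isUnit_det Vbar).1 hVpd.isUnit
  have hinv_le : (θᵀ * Vbar⁻¹ * θ).trace ≤ lam⁻¹ * (θᵀ * θ).trace := by
    simpa using trace_transpose_mul_mul_le_of_posSemidef_sub
      (posSemidef_inv_smul_one_sub_inv hlam hV) θ
  calc ((θ' - θ)ᵀ * Vbar * (θ' - θ)).trace
      = ((S - lam • θ)ᵀ * Vbar⁻¹ * (S - lam • θ)).trace := by
        rw [hθ', add_sub_cancel_left, transpose_inv_mul_mul_inv_mul hVsymm hdet]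
    _ ≤ 2 * (Sᵀ * Vbar⁻¹ * S).trace + 2 * ((lam • θ)ᵀ * Vbar⁻¹ * (lam • θ)).trace :=
        trace_transpose_mul_mul_sub_le hVpd.inv.posSemidef S (lam • θ)
    _ = 2 * (Sᵀ * Vbar⁻¹ * S).trace + 2 * lam ^ 2 * (θᵀ * Vbar⁻¹ * θ).trace := by
        simp only [transpose_smul, Matrix.smul_mul, Matrix.mul_smul, trace_smul, smul_eq_mul]
        ring
    _ ≤ 2 * (Sᵀ * Vbar⁻¹ * S).trace + 2 * lam ^ 2 * (lam⁻¹ * (θᵀ * θ).trace) := by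
        gcongr
    _ = 2 * (Sᵀ * Vbar⁻¹ * S).trace + 2 * lam * (θᵀ * θ).trace := by
        field_simp
end

section
/- Let γ > 0, ν ∈ ℝⁿ, and let D ∈ ℝ^{n×n} and F ∈ ℝ^{m×m} be symmetric matrices and E ∈ ℝ^{m×n} a matrix such that I_m − γF is positive definite and, with U = D + γEᵀ(I_m − γF)⁻¹E, the matrix I_n − γU is positive definite. Let w and η be independent standard Gaussian vectors on ℝⁿ and ℝᵐ respectively, and set x = ν + w. Then E[exp((γ/2)(xᵀDx + 2ηᵀEx + ηᵀFη))] = (det(I_n − γU))^{−1/2} · (det(I_m − γF))^{−1/2} · exp((γ/2) νᵀŨν), where Ũ = (I_n − γU)⁻¹U. -/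
/-!
Integrate out `η` first. For fixed `x` the exponent is a quadratic form in `η` plus a linear
term, so its standard Gaussian expectation is `det(I - γF)^{-1/2}` times the exponential of the
completed square, and the completed square is exactly `(γ/2) xᵀ U x`: `U` is the Schur
complement of the block matrix. What remains is the expectation of `exp((γ/2) xᵀ U x)` for the
noncentral Gaussian `x = ν + w`; completing the square once more gives
`det(I - γU)^{-1/2} exp((γ/2) νᵀ (U + γ U (I - γU)⁻¹ U) ν)`, and
`U + γ U (I - γU)⁻¹ U = (I - γU)⁻¹ U`.

Both Gaussian expectations reduce to the Lebesgue integral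
`∫ exp(-xᵀAx/2) dx = (2π)^{k/2} det(A)^{-1/2}`, obtained by writing `A = BᵀB` and
substituting `y = Bx`.
-/

open Matrix MeasureTheory ProbabilityTheory Real
open scoped Matrix

theorem MeasureTheory.Measure.pi_withDensity_ofReal {ι : Type*} [Fintype ι] {α : ι → Type*}
    [∀ i, MeasurableSpace (α i)] {μ : ∀ i, Measure (α i)} [∀ i, SigmaFinite (μ i)]
    {f : ∀ i, α i → ℝ} (hf_nonneg : ∀ i, 0 ≤ f i) (hf : ∀ i, Integrable (f i) (μ i)) :
    Measure.pi (fun i => (μ i).withDensity fun x => ENNReal.ofReal (f i x)) =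
      (Measure.pi μ).withDensity fun x => ENNReal.ofReal (∏ i, f i (x i)) := by
  refine Measure.pi_eq (μ := fun i => (μ i).withDensity fun x => ENNReal.ofReal (f i x))
    fun s hs => ?_
  have hint : ∀ i, Integrable (f i) ((μ i).restrict (s i)) := fun i => (hf i).integrableOn
  rw [withDensity_apply _ (MeasurableSet.univ_pi hs), Measure.restrict_pi_pi,
    ← ofReal_integral_eq_lintegral_ofReal (Integrable.fintype_prod_dep hint)
      (.of_forall fun x => Finset.prod_nonneg fun i _ => hf_nonneg i (x i)),
    integral_fintype_prod_eq_prod,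
    ENNReal.ofReal_prod_of_nonneg fun i _ => integral_nonneg (hf_nonneg i)]
  refine Finset.prod_congr rfl fun i _ => ?_
  rw [withDensity_apply _ (hs i),
    ofReal_integral_eq_lintegral_ofReal (hint i) (.of_forall (hf_nonneg i))]

theorem integral_prod_of_nonneg_of_integral_slice_ne_zero {α β : Type*} [MeasurableSpace α]
    [MeasurableSpace β] {μ : Measure α} {ν : Measure β} [SFinite μ] [SFinite ν]
    {f : α × β → ℝ} {g : α → ℝ} (hf_nonneg : 0 ≤ f) (hf : AEStronglyMeasurable f (μ.prod ν))
    (hfg : ∀ x, ∫ y, f (x, y) ∂ν = g x) (hg_ne : ∀ x, g x ≠ 0) (hg : Integrable g μ) :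
    ∫ z, f z ∂μ.prod ν = ∫ x, g x ∂μ := by
  have hslice (x : α) : Integrable (fun y => f (x, y)) ν :=
    .of_integral_ne_zero (hfg x ▸ hg_ne x)
  have hint : Integrable f (μ.prod ν) := by
    refine (integrable_prod_iff hf).mpr ⟨.of_forall hslice, ?_⟩
    simpa only [Real.norm_of_nonneg (hf_nonneg _), hfg] using hg
  simp_rw [integral_prod f hint, hfg]

theorem Matrix.PosDef.isSymm {ι : Type*} {A : Matrix ι ι ℝ} (hA : A.PosDef) : A.IsSymm :=
  (conjTranspose_eq_transpose_of_trivial A).symm.trans hA.isHermitian.eq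

theorem Matrix.IsSymm.dotProduct_mulVec_comm {ι R : Type*} [Fintype ι] [CommSemiring R]
    {A : Matrix ι ι R} (hA : A.IsSymm) (v w : ι → R) : v ⬝ᵥ A *ᵥ w = A *ᵥ v ⬝ᵥ w := by
  rw [dotProduct_mulVec, ← mulVec_transpose, hA.eq]

theorem Matrix.nonsing_inv_one_sub_mul {ι R : Type*} [Fintype ι] [DecidableEq ι] [CommRing R]
    {V : Matrix ι ι R} (h : IsUnit (1 - V).det) : (1 - V)⁻¹ * V = V + V * (1 - V)⁻¹ * V := by
  set W := (1 - V)⁻¹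
  have hleft : W * V = W - 1 := by
    have h1 : W * (1 - V) = 1 := nonsing_inv_mul _ h
    rw [mul_sub, mul_one] at h1
    rw [← h1]
    abel
  have hright : V * W = W - 1 := by
    have h1 : (1 - V) * W = 1 := mul_nonsing_inv _ h
    rw [sub_mul, one_mul] at h1
    rw [← h1]
    abel
  rw [hright, sub_mul, one_mul, hleft]
  abel

theorem quadratic_completing_square {ι : Type*} [Fintype ι] [DecidableEq ι]
    {A : Matrix ι ι ℝ} (hA : A.IsSymm) (hdet : IsUnit A.det) (b y : ι → ℝ) :
    -((y + A⁻¹ *ᵥ b) ⬝ᵥ A *ᵥ (y + A⁻¹ *ᵥ b)) / 2 + b ⬝ᵥ (y + A⁻¹ *ᵥ b) =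
      -(y ⬝ᵥ A *ᵥ y) / 2 + b ⬝ᵥ A⁻¹ *ᵥ b / 2 := by
  have hAb : A *ᵥ (A⁻¹ *ᵥ b) = b := by rw [mulVec_mulVec, mul_nonsing_inv _ hdet, one_mulVec]
  simp only [mulVec_add, hAb, add_dotProduct, dotProduct_add]
  rw [hA.dotProduct_mulVec_comm (A⁻¹ *ᵥ b), hAb, dotProduct_comm y b, dotProduct_comm _ b]
  ring

section GaussianIntegrals

variable {ι : Type*} [Fintype ι]

theorem prod_gaussianPDFReal_zero_one (x : ι → ℝ) :
    ∏ i, gaussianPDFReal 0 1 (x i) = (√(2 * π))⁻¹ ^ Fintype.card ι * exp (-(x ⬝ᵥ x) / 2) := by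
  simp only [gaussianPDFReal_def, NNReal.coe_one, mul_one, sub_zero, Finset.prod_mul_distrib,
    Finset.prod_const, Finset.card_univ, ← exp_sum, dotProduct, Finset.sum_div,
    ← Finset.sum_neg_distrib, sq]

theorem pi_gaussianReal_zero_one :
    Measure.pi (fun _ : ι => gaussianReal 0 1) =
      volume.withDensity fun x => ENNReal.ofReal (∏ i, gaussianPDFReal 0 1 (x i)) := by
  simp_rw [volume_pi, gaussianReal_of_var_ne_zero 0 one_ne_zero]
  exact Measure.pi_withDensity_ofReal (fun _ => gaussianPDFReal_nonneg 0 1)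
    fun _ => integrable_gaussianPDFReal 0 1

theorem integral_pi_gaussianReal_zero_one (g : (ι → ℝ) → ℝ) :
    ∫ x, g x ∂Measure.pi (fun _ : ι => gaussianReal 0 1) =
      (√(2 * π))⁻¹ ^ Fintype.card ι * ∫ x, exp (-(x ⬝ᵥ x) / 2) * g x := by
  rw [pi_gaussianReal_zero_one, integral_withDensity_eq_integral_toReal_smul (by fun_prop)
    (.of_forall fun _ => ENNReal.ofReal_lt_top), ← integral_const_mul]
  refine integral_congr_ae (.of_forall fun x => ?_)
  dsimp only
  rw [ENNReal.toReal_ofReal (Finset.prod_nonneg fun i _ => gaussianPDFReal_nonneg 0 1 (x i)),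
    prod_gaussianPDFReal_zero_one, smul_eq_mul, mul_assoc]

theorem integral_exp_neg_half_dotProduct_self :
    ∫ x : ι → ℝ, exp (-(x ⬝ᵥ x) / 2) = √(2 * π) ^ Fintype.card ι := by
  have h : ∀ x : ι → ℝ, exp (-(x ⬝ᵥ x) / 2) = ∏ i, exp (-(1 / 2) * x i ^ 2) := fun x => by
    rw [← exp_sum]
    congr 1
    simp only [dotProduct, Finset.sum_div, ← Finset.sum_neg_distrib, sq]
    ring_nf
  simp_rw [h]
  rw [integral_fintype_prod_volume_eq_pow (fun t : ℝ => exp (-(1 / 2) * t ^ 2)),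
    integral_gaussian]
  norm_num [div_eq_mul_inv, mul_comm]

variable [DecidableEq ι]

theorem integral_comp_mulVec {M : Matrix ι ι ℝ} (hM : M.det ≠ 0) (g : (ι → ℝ) → ℝ) :
    ∫ x, g (M *ᵥ x) = |M.det|⁻¹ * ∫ x, g x := by
  have hinv : Invertible M := M.invertibleOfIsUnitDet (isUnit_iff_ne_zero.mpr hM)
  have hemb : MeasurableEmbedding (Matrix.toLin' M) :=
    (M.toLinearEquiv' hinv).toContinuousLinearEquiv.toHomeomorph.measurableEmbedding
  have hmap := hemb.integral_map (μ := volume) g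
  simp only [Matrix.toLin'_apply] at hmap
  rw [← hmap, Real.map_matrix_volume_pi_eq_smul_volume_pi hM, integral_smul_measure,
    ENNReal.toReal_ofReal (abs_nonneg _), abs_inv, smul_eq_mul]

open scoped MatrixOrder in
theorem integral_exp_neg_half_quadratic {A : Matrix ι ι ℝ} (hA : A.PosDef) :
    ∫ x, exp (-(x ⬝ᵥ A *ᵥ x) / 2) = √(2 * π) ^ Fintype.card ι * A.det ^ (-(1 / 2) : ℝ) := by
  obtain ⟨B, rfl⟩ := CStarAlgebra.nonneg_iff_eq_star_mul_self.mp hA.posSemidef.nonneg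
  have hdet : (star B * B).det = B.det ^ 2 := by
    rw [det_mul, star_eq_conjTranspose, det_conjTranspose, star_trivial, sq]
  have hB : B.det ≠ 0 := fun h => by simpa [hdet, h] using hA.det_pos
  have hquad : ∀ x, x ⬝ᵥ (star B * B) *ᵥ x = (B *ᵥ x) ⬝ᵥ (B *ᵥ x) := fun x => by
    rw [← mulVec_mulVec, dotProduct_mulVec, star_eq_conjTranspose,
      conjTranspose_eq_transpose_of_trivial, vecMul_transpose]
  simp_rw [hquad]
  rw [integral_comp_mulVec hB (fun y => exp (-(y ⬝ᵥ y) / 2)),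
    integral_exp_neg_half_dotProduct_self, hdet, rpow_neg (sq_nonneg _), ← sqrt_eq_rpow,
    sqrt_sq_eq_abs, mul_comm]

theorem integral_exp_neg_half_quadratic_add_linear {A : Matrix ι ι ℝ} (hA : A.PosDef)
    (b : ι → ℝ) :
    ∫ x, exp (-(x ⬝ᵥ A *ᵥ x) / 2 + b ⬝ᵥ x) =
      √(2 * π) ^ Fintype.card ι * A.det ^ (-(1 / 2) : ℝ) * exp (b ⬝ᵥ A⁻¹ *ᵥ b / 2) := by
  rw [← integral_add_right_eq_self _ (A⁻¹ *ᵥ b)]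
  simp_rw [quadratic_completing_square hA.isSymm ((isUnit_iff_isUnit_det A).mp hA.isUnit) b,
    exp_add, integral_mul_const, integral_exp_neg_half_quadratic hA]

theorem integral_exp_half_quadratic_add_linear_pi_gaussianReal {M : Matrix ι ι ℝ}
    (hM : (1 - M).PosDef) (b : ι → ℝ) :
    ∫ x, exp (x ⬝ᵥ M *ᵥ x / 2 + b ⬝ᵥ x) ∂Measure.pi (fun _ : ι => gaussianReal 0 1) =
      (1 - M).det ^ (-(1 / 2) : ℝ) * exp (b ⬝ᵥ (1 - M)⁻¹ *ᵥ b / 2) := by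
  have hdensity : ∀ x : ι → ℝ, exp (-(x ⬝ᵥ x) / 2) * exp (x ⬝ᵥ M *ᵥ x / 2 + b ⬝ᵥ x) =
      exp (-(x ⬝ᵥ (1 - M) *ᵥ x) / 2 + b ⬝ᵥ x) := fun x => by
    rw [← exp_add, sub_mulVec, one_mulVec, dotProduct_sub]
    ring_nf
  rw [integral_pi_gaussianReal_zero_one]
  simp_rw [hdensity]
  rw [integral_exp_neg_half_quadratic_add_linear hM, ← mul_assoc, ← mul_assoc, ← mul_pow,
    inv_mul_cancel₀ (by positivity), one_pow, one_mul]

theorem integral_exp_half_quadratic_shift_pi_gaussianReal {V : Matrix ι ι ℝ}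
    (hV : (1 - V).PosDef) (ν : ι → ℝ) :
    ∫ x, exp ((ν + x) ⬝ᵥ V *ᵥ (ν + x) / 2) ∂Measure.pi (fun _ : ι => gaussianReal 0 1) =
      (1 - V).det ^ (-(1 / 2) : ℝ) * exp (ν ⬝ᵥ ((1 - V)⁻¹ * V) *ᵥ ν / 2) := by
  have hV_symm : V.IsSymm := by simpa using isSymm_one.sub hV.isSymm
  have hexpand : ∀ x, (ν + x) ⬝ᵥ V *ᵥ (ν + x) / 2 =
      (x ⬝ᵥ V *ᵥ x / 2 + V *ᵥ ν ⬝ᵥ x) + ν ⬝ᵥ V *ᵥ ν / 2 := fun x => by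
    rw [mulVec_add, dotProduct_add, add_dotProduct, add_dotProduct,
      hV_symm.dotProduct_mulVec_comm ν x, dotProduct_comm x (V *ᵥ ν)]
    ring
  simp_rw [hexpand, exp_add _ (ν ⬝ᵥ V *ᵥ ν / 2), integral_mul_const]
  rw [integral_exp_half_quadratic_add_linear_pi_gaussianReal hV, mul_assoc, ← exp_add,
    nonsing_inv_one_sub_mul ((isUnit_iff_isUnit_det _).mp hV.isUnit), add_mulVec,
    dotProduct_add, ← mulVec_mulVec, ← mulVec_mulVec,
    hV_symm.dotProduct_mulVec_comm ν ((1 - V)⁻¹ *ᵥ V *ᵥ ν)]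
  ring_nf

end GaussianIntegrals

theorem gaussian_block_exp_quadratic_moment_general {n m : ℕ} (γ : ℝ)
    (ν : Fin n → ℝ)
    (D : Matrix (Fin n) (Fin n) ℝ)
    (F : Matrix (Fin m) (Fin m) ℝ)
    (E : Matrix (Fin m) (Fin n) ℝ)
    (hFwf : (1 - γ • F).PosDef)
    (U : Matrix (Fin n) (Fin n) ℝ)
    (hU : U = D + γ • (Eᵀ * (1 - γ • F)⁻¹ * E))
    (hUwf : (1 - γ • U).PosDef) :
    ∫ p : (Fin n → ℝ) × (Fin m → ℝ),
        Real.exp ((γ / 2) *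
          ((ν + p.1) ⬝ᵥ D.mulVec (ν + p.1) +
            2 * (p.2 ⬝ᵥ E.mulVec (ν + p.1)) +
            p.2 ⬝ᵥ F.mulVec p.2))
        ∂((Measure.pi fun _ : Fin n => gaussianReal 0 1).prod
            (Measure.pi fun _ : Fin m => gaussianReal 0 1)) =
      ((1 - γ • U).det) ^ (-(1 / 2) : ℝ) * ((1 - γ • F).det) ^ (-(1 / 2) : ℝ) *
        Real.exp ((γ / 2) * (ν ⬝ᵥ ((1 - γ • U)⁻¹ * U).mulVec ν)) := by
  have hsplit (z : Fin n → ℝ) (η : Fin m → ℝ) :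
      γ / 2 * (z ⬝ᵥ D *ᵥ z + 2 * (η ⬝ᵥ E *ᵥ z) + η ⬝ᵥ F *ᵥ η) =
        (η ⬝ᵥ (γ • F) *ᵥ η / 2 + γ • E *ᵥ z ⬝ᵥ η) + γ / 2 * (z ⬝ᵥ D *ᵥ z) := by
    simp only [Matrix.smul_mulVec, smul_dotProduct, dotProduct_smul, smul_eq_mul,
      dotProduct_comm (E *ᵥ z) η]
    ring
  have hschur (z : Fin n → ℝ) :
      γ • E *ᵥ z ⬝ᵥ (1 - γ • F)⁻¹ *ᵥ (γ • E *ᵥ z) / 2 + γ / 2 * (z ⬝ᵥ D *ᵥ z) =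
        z ⬝ᵥ (γ • U) *ᵥ z / 2 := by
    simp only [hU, smul_add, add_mulVec, Matrix.smul_mulVec, ← mulVec_mulVec, dotProduct_add,
      dotProduct_smul, smul_dotProduct, mulVec_smul, dotProduct_mulVec z Eᵀ, vecMul_transpose,
      smul_eq_mul]
    ring
  have hinner (x : Fin n → ℝ) :
      ∫ η, exp (γ / 2 * ((ν + x) ⬝ᵥ D *ᵥ (ν + x) + 2 * (η ⬝ᵥ E *ᵥ (ν + x)) + η ⬝ᵥ F *ᵥ η))
          ∂Measure.pi (fun _ : Fin m => gaussianReal 0 1) =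
        (1 - γ • F).det ^ (-(1 / 2) : ℝ) * exp ((ν + x) ⬝ᵥ (γ • U) *ᵥ (ν + x) / 2) := by
    simp_rw [hsplit, exp_add _ (γ / 2 * _), integral_mul_const]
    rw [integral_exp_half_quadratic_add_linear_pi_gaussianReal hFwf, mul_assoc, ← exp_add,
      hschur]
  have houter := integral_exp_half_quadratic_shift_pi_gaussianReal hUwf ν
  rw [integral_prod_of_nonneg_of_integral_slice_ne_zero (fun _ => (exp_pos _).le)
    (by fun_prop) hinner (fun _ => (mul_pos (rpow_pos_of_pos hFwf.det_pos _) (exp_pos _)).ne')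
    ((Integrable.of_integral_ne_zero
      (houter ▸ (mul_pos (rpow_pos_of_pos hUwf.det_pos _) (exp_pos _)).ne')).const_mul _),
    integral_const_mul, houter]
  simp only [mul_smul_comm, Matrix.smul_mulVec, dotProduct_smul, smul_eq_mul]
  ring_nf

/-- Block-matrix Gaussian identity (the paper's Lemma `LEM2:gap2`,
stated unconditionally): with `x = ν + w`, `w` and `η` independent standard Gaussians,
`E[exp((γ/2)(xᵀDx + 2ηᵀEx + ηᵀFη))]`
`= det(I_n - γU)^{-1/2} det(I_m - γF)^{-1/2} exp((γ/2) νᵀ Ũ ν)`,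
where `U = D + γEᵀ(I_m - γF)⁻¹E` and `Ũ = (I_n - γU)⁻¹U`. -/
theorem gaussian_block_exp_quadratic_moment {n m : ℕ} (γ : ℝ) (hγ : 0 < γ)
    (ν : Fin n → ℝ)
    (D : Matrix (Fin n) (Fin n) ℝ) (hD : D.IsSymm)
    (F : Matrix (Fin m) (Fin m) ℝ) (hF : F.IsSymm)
    (E : Matrix (Fin m) (Fin n) ℝ)
    (hFwf : (1 - γ • F).PosDef)
    (U : Matrix (Fin n) (Fin n) ℝ)
    (hU : U = D + γ • (Eᵀ * (1 - γ • F)⁻¹ * E))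
    (hUwf : (1 - γ • U).PosDef) :
    ∫ p : (Fin n → ℝ) × (Fin m → ℝ),
        Real.exp ((γ / 2) *
          ((ν + p.1) ⬝ᵥ D.mulVec (ν + p.1) +
            2 * (p.2 ⬝ᵥ E.mulVec (ν + p.1)) +
            p.2 ⬝ᵥ F.mulVec p.2))
        ∂((Measure.pi fun _ : Fin n => gaussianReal 0 1).prod
            (Measure.pi fun _ : Fin m => gaussianReal 0 1)) =
      ((1 - γ • U).det) ^ (-(1 / 2) : ℝ) * ((1 - γ • F).det) ^ (-(1 / 2) : ℝ) *
        Real.exp ((γ / 2) * (ν ⬝ᵥ ((1 - γ • U)⁻¹ * U).mulVec ν)) :=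
  gaussian_block_exp_quadratic_moment_general γ ν D F E hFwf U hU hUwf
end
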